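/- arXiv:2302.01212 — 4 statements merged into one kernel-verified Lean document; each statement's English description precedes it below -/
import Mathlib

section
/- Let γ ≥ 1/2 and ε ∈ (0,1). Let G be a finite D-regular graph together with, for each vertex v, a bijection labeling the D edges incident to v by {1,…,D} (write e_v^i for the edge labeled i at v), and let H be a graph on vertex set {1,…,D}. Suppose (1) every S ⊆ V(G) with |S| ≤ ε|V(G)| satisfies 2e(S) ≤ γ|S|, and (2) P_H(t) ≥ 12γ/t for all real t with 1 ≤ t ≤ 2γ. Let Z = G ◇ H be the line product. Then every nonempty T ⊆ V(Z) with |T| ≤ (ε/D)·|V(Z)| satisfies |UN_Z(T)| ≥ (P_H(2γ)/3)·|T|. -/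
/-!
For `v ∈ V(G)` let `T_v ⊆ [D]` be the labels at `v` of the edges of `T` and `t_v = |T_v|`, so
that `∑ t_v = 2|T|`; the vertices with `t_v > 0` form a set `S` with `|S| ≤ 2|T| ≤ ε|V(G)|`.
If `j ∈ UN_H(T_v)` and the other endpoint of `e_v^j` lies outside `S`, then no edge of `T` is
adjacent to `e_v^j` through that endpoint, so `e_v^j ∈ UN_Z(T)`; these edges are distinct for
distinct pairs `(v, j)`. The remaining pairs are edges inside `S`, counted from both ends, so
`|UN_Z(T)| ≥ ∑_v |UN_H(T_v)| - 2e(S) ≥ ∑_v |UN_H(T_v)| - γ|S|`.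

Split `S` into the light vertices `L` (`t_v ≤ 2γ`) and the heavy ones `B` (`t_v > 2γ`), and let
`A = ∑_L t_v`. A light vertex has `|UN_H(T_v)| ≥ max(12γ, P_H(2γ) t_v)` by the hypothesis on `H`.
Since `B` is small, `2γ|B| ≤ ∑_B t_v ≤ 2e(B) + A ≤ γ|B| + A`, so the heavy vertices carry at
most twice the light mass and `γ|B| ≤ A ≤ 2γ|L|`. Hence
`|UN_Z(T)| ≥ 5γ|L| + P_H(2γ) A / 2 - γ|B| ≥ P_H(2γ) A / 2 ≥ P_H(2γ) |T| / 3`.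
-/

open scoped Classical

noncomputable section

namespace UNE

/-- The set of neighbors of a vertex set `S`. -/
def nbrSet {V : Type*} (G : SimpleGraph V) (S : Set V) : Set V :=
  {v | ∃ u ∈ S, G.Adj v u}

/-- The set of unique-neighbors of `S`: vertices with exactly one neighbor in `S`. -/
def uniqueNbrs {V : Type*} (G : SimpleGraph V) (S : Set V) : Set V :=
  {v | ∃! u, u ∈ S ∧ G.Adj v u}

/-- Degree of a vertex. -/
def deg {V : Type*} (G : SimpleGraph V) (v : V) : ℕ :=
  {u | G.Adj v u}.ncard

/-- `L, R` is a bipartition of `G`. -/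
structure IsBipartition {V : Type*} (G : SimpleGraph V) (L R : Set V) : Prop where
  disj : Disjoint L R
  cover : L ∪ R = Set.univ
  cross : ∀ ⦃u v⦄, G.Adj u v → (u ∈ L ∧ v ∈ R) ∨ (u ∈ R ∧ v ∈ L)

/-- `G` is `(c,d)`-biregular with parts `L` and `R`. -/
structure IsBiregular {V : Type*} (G : SimpleGraph V) (L R : Set V) (c d : ℕ)
    extends IsBipartition G L R : Prop where
  degL : ∀ v ∈ L, deg G v = c
  degR : ∀ v ∈ R, deg G v = d

/-- Adjacency matrix over ℝ. -/
def adjMat {V : Type*} (G : SimpleGraph V) : Matrix V V ℝ :=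
  Matrix.of fun u v => if G.Adj u v then (1 : ℝ) else 0

/-- Diagonal degree matrix. -/
def degMat {V : Type*} (G : SimpleGraph V) : Matrix V V ℝ :=
  Matrix.diagonal fun v => (deg G v : ℝ)

/-- Bethe Hessian `H_G(t) = (D - I) t² - t A + I`. -/
def betheHessian {V : Type*} (G : SimpleGraph V) (t : ℝ) : Matrix V V ℝ :=
  t ^ 2 • (degMat G - 1) - t • adjMat G + 1

/-- The second largest eigenvalue (with multiplicity) of a square real matrix,
read off from the multiset of real roots of its characteristic polynomial. -/
def secondEig {V : Type*} [Fintype V] (A : Matrix V V ℝ) : ℝ :=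
  (A.charpoly.roots.sort (· ≤ ·)).getD ((A.charpoly.roots.sort (· ≤ ·)).length - 2) 0

/-- Orientations of edges of `G`. -/
abbrev Orient {V : Type*} (G : SimpleGraph V) : Type _ := {p : V × V // G.Adj p.1 p.2}

/-- The non-backtracking matrix of `G`. -/
def nonBacktracking {V : Type*} (G : SimpleGraph V) : Matrix (Orient G) (Orient G) ℝ :=
  Matrix.of fun e f => if e.1.2 = f.1.1 ∧ e.1.1 ≠ f.1.2 then (1 : ℝ) else 0

/-- Spectral radius: largest absolute value of a complex eigenvalue. -/
def specRad {n : Type*} [Fintype n] (A : Matrix n n ℝ) : ℝ :=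
  (((A.map fun x => (x : ℂ)).charpoly.roots.map fun z => ‖z‖).toList.foldr max 0)

/-- `G` contains a bicycle (connected subgraph with one more edge than vertices)
on at most `ℓ` vertices. -/
def HasBicycle {V : Type*} (G : SimpleGraph V) (ℓ : ℝ) : Prop :=
  ∃ H : G.Subgraph, H.Connected ∧ H.edgeSet.ncard = H.verts.ncard + 1 ∧ (H.verts.ncard : ℝ) ≤ ℓ

/-- `G` contains a cycle of length at most `ℓ`. -/
def HasCycleLe {V : Type*} (G : SimpleGraph V) (ℓ : ℝ) : Prop :=
  ∃ (v : V) (w : G.Walk v v), w.IsCycle ∧ (w.length : ℝ) ≤ ℓ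

/-- Number of edges of `G` with both endpoints in `S`. -/
def eInside {V : Type*} (G : SimpleGraph V) (S : Set V) : ℕ :=
  {e ∈ G.edgeSet | ∀ v ∈ e, v ∈ S}.ncard

/-- Number of edges of `G` with one endpoint in `S` and the other in `T`. -/
def eBetween {V : Type*} (G : SimpleGraph V) (S T : Set V) : ℕ :=
  {e ∈ G.edgeSet | ∃ u ∈ S, ∃ v ∈ T, e = s(u, v)}.ncard

/-- Unique-neighbor expansion profile `P_H(t)`. -/
def profile {V : Type*} (H : SimpleGraph V) (t : ℝ) : ℝ :=
  sInf {r | ∃ S : Set V, S.Nonempty ∧ (S.ncard : ℝ) ≤ t ∧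
    r = ((uniqueNbrs H S).ncard : ℝ) / (S.ncard : ℝ)}

open Finset

section Sym2

variable {V : Type*}

lemma eq_of_mem_of_mem_of_ne {e : Sym2 V} {v w x : V} (hv : v ∈ e) (hw : w ∈ e)
    (hx : x ∈ e) (hxv : v ≠ x) (hxw : w ≠ x) : w = v := by
  rw [(Sym2.mem_and_mem_iff hxv).1 ⟨hv, hx⟩] at hw
  exact (Sym2.mem_iff.1 hw).resolve_right hxw

lemma card_filter_mem_le [Fintype V] {e : Sym2 V} (he : ¬ e.IsDiag) (B : Finset V) :
    #{v ∈ B | v ∈ e} ≤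
      2 * (if ∀ v ∈ e, v ∈ B then 1 else 0) + #{v ∈ Bᶜ | v ∈ e} := by
  have hsplit : #{v ∈ B | v ∈ e} + #{v ∈ Bᶜ | v ∈ e} = 2 := by
    rw [← Sym2.card_toFinset_of_not_isDiag e he, ← card_inter_add_card_sdiff e.toFinset B]
    congr 2 <;> ext <;> simp [and_comm]
  split_ifs with hB
  · omega
  · obtain ⟨x, hx, hxB⟩ := not_forall₂.1 hB
    have : 0 < #{v ∈ Bᶜ | v ∈ e} := card_pos.2 ⟨x, by simp [hx, hxB]⟩
    omega

end Sym2

section Profile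

variable {W : Type*} (H : SimpleGraph W)

lemma profile_nonneg (t : ℝ) : 0 ≤ profile H t :=
  Real.sInf_nonneg <| by rintro r ⟨S, -, -, rfl⟩; positivity

lemma profile_mul_ncard_le {S : Set W} {t : ℝ} (hS : S.Nonempty) (ht : (S.ncard : ℝ) ≤ t) :
    profile H t * S.ncard ≤ (uniqueNbrs H S).ncard := by
  rcases (Nat.cast_nonneg S.ncard : (0 : ℝ) ≤ _).eq_or_lt with h0 | hpos
  · rw [← h0, mul_zero]; positivity
  rw [← le_div_iff₀ hpos]
  exact csInf_le ⟨0, by rintro r ⟨S, -, -, rfl⟩; positivity⟩ ⟨S, hS, ht, rfl⟩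

variable {H}

lemma add_le_ncard_uniqueNbrs [Finite W] {γ : ℝ}
    (hH : ∀ t : ℝ, 1 ≤ t → t ≤ 2 * γ → 12 * γ / t ≤ profile H t)
    {S : Set W} (hS : S.Nonempty) (hSγ : (S.ncard : ℝ) ≤ 2 * γ) :
    6 * γ + profile H (2 * γ) * S.ncard / 2 ≤ (uniqueNbrs H S).ncard := by
  have hS1 : (1 : ℝ) ≤ S.ncard := by exact_mod_cast (Set.ncard_pos S.toFinite).2 hS
  have h12 : 12 * γ ≤ (uniqueNbrs H S).ncard := by
    have := (div_le_iff₀ (by linarith)).1 (hH _ hS1 hSγ)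
    linarith [profile_mul_ncard_le H hS le_rfl]
  linarith [profile_mul_ncard_le H hS hSγ]

end Profile

section EdgeLabeling

variable {V : Type*} {D : ℕ}

structure IsEdgeLabeling (G : SimpleGraph V) (eLab : V → Fin D → Sym2 V) : Prop where
  mem_edgeSet : ∀ v i, eLab v i ∈ G.edgeSet
  mem : ∀ v i, v ∈ eLab v i
  injective : ∀ v, Function.Injective (eLab v)
  exists_eq : ∀ ⦃v e⦄, e ∈ G.edgeSet → v ∈ e → ∃ i, eLab v i = e

lemma deg_eq_degree [Fintype V] (G : SimpleGraph V) [DecidableRel G.Adj] (v : V) :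
    deg G v = G.degree v :=
  (Nat.card_coe_set_eq _).symm.trans <|
    Nat.card_eq_fintype_card.trans (G.card_neighborSet_eq_degree v)

def localSet {G : SimpleGraph V} (eLab : V → Fin D → Sym2 V) (T : Set G.edgeSet) (v : V) :
    Finset (Fin D) :=
  {i | ∃ e ∈ T, (e : Sym2 V) = eLab v i}

def localSupport [Fintype V] {G : SimpleGraph V} (eLab : V → Fin D → Sym2 V)
    (T : Set G.edgeSet) : Finset V :=
  {v | (localSet eLab T v).Nonempty}

def insideEdges (G : SimpleGraph V) (W : Set V) : Set G.edgeSet :=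
  {e | ∀ v ∈ (e : Sym2 V), v ∈ W}

lemma ncard_insideEdges (G : SimpleGraph V) (W : Set V) :
    (insideEdges G W).ncard = eInside G W := by
  rw [eInside, ← Set.ncard_image_of_injective _ Subtype.val_injective]
  congr 1
  ext e
  simp [insideEdges, and_comm]

variable {G : SimpleGraph V} {eLab : V → Fin D → Sym2 V}

lemma IsEdgeLabeling.of_regular [Fintype V] (hreg : ∀ v, deg G v = D)
    (hmem : ∀ v i, eLab v i ∈ G.edgeSet ∧ v ∈ eLab v i)
    (hinj : ∀ v, Function.Injective (eLab v)) : IsEdgeLabeling G eLab where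
  mem_edgeSet v i := (hmem v i).1
  mem v i := (hmem v i).2
  injective := hinj
  exists_eq v e he hv := by
    have himage : univ.image (eLab v) = G.incidenceFinset v := by
      refine eq_of_subset_of_card_le (fun e he => ?_) ?_
      · obtain ⟨i, -, rfl⟩ := mem_image.1 he
        exact (G.mem_incidenceFinset _ _).2 (hmem v i)
      · rw [card_image_of_injective _ (hinj v), G.card_incidenceFinset_eq_degree,
          ← deg_eq_degree, hreg, card_univ, Fintype.card_fin]
    obtain ⟨i, -, hi⟩ := mem_image.1 (himage ▸ (G.mem_incidenceFinset v e).2 ⟨he, hv⟩)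
    exact ⟨i, hi⟩

lemma two_mul_card_edgeSet [Fintype V] (hreg : ∀ v, deg G v = D) :
    2 * Nat.card G.edgeSet = Fintype.card V * D := by
  rw [Nat.card_eq_fintype_card, ← G.edgeFinset_card, ← G.sum_degrees_eq_twice_card_edges]
  simp [← deg_eq_degree, hreg]

lemma two_mul_ncard_le_of_regular [Fintype V] (hreg : ∀ v, deg G v = D) {T : Set G.edgeSet}
    (hT : T.Nonempty) {ε : ℝ} (hTcard : (T.ncard : ℝ) ≤ ε / D * Nat.card G.edgeSet) :
    2 * (T.ncard : ℝ) ≤ ε * Fintype.card V := by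
  have hD : (D : ℝ) ≠ 0 := by
    intro hD
    rw [hD, div_zero, zero_mul] at hTcard
    exact ((Set.ncard_pos T.toFinite).2 hT).ne' (by exact_mod_cast hTcard.antisymm (by positivity))
  have hE : 2 * (Nat.card G.edgeSet : ℝ) = Fintype.card V * D := by
    exact_mod_cast two_mul_card_edgeSet hreg
  calc 2 * (T.ncard : ℝ) ≤ ε / D * (2 * Nat.card G.edgeSet) := by linarith
    _ = ε * Fintype.card V := by rw [hE]; field_simp

lemma mem_localSet {T : Set G.edgeSet} {v : V} {i : Fin D} (hi : eLab v i ∈ G.edgeSet) :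
    i ∈ localSet eLab T v ↔ (⟨eLab v i, hi⟩ : G.edgeSet) ∈ T := by
  simp only [localSet, mem_filter, mem_univ, true_and]
  constructor
  · rintro ⟨e, he, hei⟩
    rwa [show (⟨eLab v i, hi⟩ : G.edgeSet) = e from Subtype.ext hei.symm]
  · exact fun h => ⟨_, h, rfl⟩

variable [Fintype V]

lemma IsEdgeLabeling.card_localSet (hL : IsEdgeLabeling G eLab) (T : Set G.edgeSet) (v : V) :
    #(localSet eLab T v) = #{e ∈ T.toFinset | v ∈ e.1} := by
  refine card_bij (fun i _ => (⟨eLab v i, hL.mem_edgeSet v i⟩ : G.edgeSet)) (fun i hi => ?_)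
    (fun i _ j _ h => hL.injective v (Subtype.mk.inj h)) (fun e he => ?_)
  · simpa [hL.mem v i] using (mem_localSet _).1 hi
  · obtain ⟨heT, hv⟩ := mem_filter.1 he
    obtain ⟨i, hi⟩ := hL.exists_eq e.2 hv
    have hei : (⟨eLab v i, hL.mem_edgeSet v i⟩ : G.edgeSet) = e := Subtype.ext hi
    exact ⟨i, (mem_localSet _).2 (hei ▸ Set.mem_toFinset.1 heT), hei⟩

lemma IsEdgeLabeling.sum_card_localSet (hL : IsEdgeLabeling G eLab) (T : Set G.edgeSet) :
    ∑ v, #(localSet eLab T v) = 2 * T.ncard := by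
  calc ∑ v, #(localSet eLab T v) = ∑ e ∈ T.toFinset, #{v | v ∈ e.1} := by
        simp_rw [hL.card_localSet]
        exact sum_card_bipartiteAbove_eq_sum_card_bipartiteBelow _
    _ = ∑ e ∈ T.toFinset, 2 := sum_congr rfl fun e _ => by
        rw [show ({v | v ∈ e.1} : Finset V) = e.1.toFinset by ext; simp]
        exact Sym2.card_toFinset_of_not_isDiag _ (G.not_isDiag_of_mem_edgeSet e.2)
    _ = 2 * T.ncard := by rw [sum_const, smul_eq_mul, mul_comm, Set.ncard_eq_toFinset_card']

lemma IsEdgeLabeling.sum_card_localSet_le (hL : IsEdgeLabeling G eLab) (T : Set G.edgeSet)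
    (B : Finset V) :
    ∑ v ∈ B, #(localSet eLab T v) ≤
      2 * eInside G B + ∑ v ∈ Bᶜ, #(localSet eLab T v) := by
  have hcount (s : Finset V) : ∑ v ∈ s, #(localSet eLab T v) =
      ∑ e ∈ T.toFinset, #{v ∈ s | v ∈ e.1} := by
    simp_rw [hL.card_localSet]
    exact sum_card_bipartiteAbove_eq_sum_card_bipartiteBelow _
  calc ∑ v ∈ B, #(localSet eLab T v)
      ≤ ∑ e ∈ T.toFinset,
          (2 * (if ∀ v ∈ e.1, v ∈ B then 1 else 0) + #{v ∈ Bᶜ | v ∈ e.1}) :=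
        hcount B ▸ sum_le_sum fun e _ => card_filter_mem_le (G.not_isDiag_of_mem_edgeSet e.2) B
    _ = 2 * #{e ∈ T.toFinset | ∀ v ∈ e.1, v ∈ B} +
          ∑ v ∈ Bᶜ, #(localSet eLab T v) := by
        rw [sum_add_distrib, ← mul_sum, ← card_filter, hcount]
    _ ≤ 2 * eInside G B + ∑ v ∈ Bᶜ, #(localSet eLab T v) := by
        have hinside : #{e ∈ T.toFinset | ∀ v ∈ e.1, v ∈ B} ≤ eInside G B := by
          rw [← ncard_insideEdges, ← Set.ncard_coe_finset]
          exact Set.ncard_le_ncard fun e he => (mem_filter.1 (mem_coe.1 he)).2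
        omega

lemma card_localSupport_le (T : Set G.edgeSet) :
    #(localSupport eLab T) ≤ ∑ v, #(localSet eLab T v) :=
  calc #(localSupport eLab T) ≤ ∑ v ∈ localSupport eLab T, #(localSet eLab T v) := by
        simpa using card_nsmul_le_sum (localSupport eLab T) (fun v => #(localSet eLab T v)) 1
          fun v hv => card_pos.2 (mem_filter.1 hv).2
    _ ≤ ∑ v, #(localSet eLab T v) := sum_le_sum_of_subset (subset_univ _)

end EdgeLabeling

section LineProduct

variable {V : Type*} {D : ℕ} {G : SimpleGraph V} {eLab : V → Fin D → Sym2 V}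

def IsLineProduct (Z : SimpleGraph G.edgeSet) (eLab : V → Fin D → Sym2 V)
    (H : SimpleGraph (Fin D)) : Prop :=
  ∀ e f : G.edgeSet, Z.Adj e f ↔
    ∃ (v : V) (i j : Fin D), H.Adj i j ∧ (e : Sym2 V) = eLab v i ∧ (f : Sym2 V) = eLab v j

variable [Fintype V] {H : SimpleGraph (Fin D)} {Z : SimpleGraph G.edgeSet}

lemma mem_localSupport_of_mem_uniqueNbrs {T : Set G.edgeSet} {v : V} {j : Fin D}
    (hj : j ∈ uniqueNbrs H ↑(localSet eLab T v)) : v ∈ localSupport eLab T := by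
  obtain ⟨u, ⟨hu, -⟩, -⟩ := hj
  simpa [localSupport] using ⟨u, hu⟩

lemma IsEdgeLabeling.mem_localSupport (hL : IsEdgeLabeling G eLab) {T : Set G.edgeSet}
    {e : G.edgeSet} (he : e ∈ T) {v : V} (hv : v ∈ e.1) : v ∈ localSupport eLab T := by
  obtain ⟨i, hi⟩ := hL.exists_eq e.2 hv
  have hei : (⟨eLab v i, hL.mem_edgeSet v i⟩ : G.edgeSet) = e := Subtype.ext hi
  simpa [localSupport] using ⟨i, (mem_localSet _).2 (hei ▸ he)⟩

lemma IsEdgeLabeling.mem_uniqueNbrs_of_mem_uniqueNbrs_localSet (hL : IsEdgeLabeling G eLab)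
    (hZ : IsLineProduct Z eLab H) {T : Set G.edgeSet} {v : V} {j : Fin D}
    (hj : j ∈ uniqueNbrs H ↑(localSet eLab T v)) {x : V} (hx : x ∈ eLab v j)
    (hxT : x ∉ localSupport eLab T) :
    (⟨eLab v j, hL.mem_edgeSet v j⟩ : G.edgeSet) ∈ uniqueNbrs Z T := by
  have hvT := mem_localSupport_of_mem_uniqueNbrs hj
  obtain ⟨u, ⟨hu, hju⟩, huniq⟩ := hj
  refine ⟨_, ⟨(mem_localSet (hL.mem_edgeSet v u)).1 hu,
    (hZ _ _).2 ⟨v, j, u, hju, rfl, rfl⟩⟩, ?_⟩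
  rintro f ⟨hf, hadj⟩
  obtain ⟨w, i, k, hik, hwi, hwk⟩ := (hZ _ _).1 hadj
  dsimp only at hwi
  have hwT : w ∈ localSupport eLab T := hL.mem_localSupport hf (hwk ▸ hL.mem w k)
  obtain rfl : w = v := eq_of_mem_of_mem_of_ne (hL.mem v j) (hwi ▸ hL.mem w i) hx
    (ne_of_mem_of_not_mem hvT hxT) (ne_of_mem_of_not_mem hwT hxT)
  obtain rfl : i = j := hL.injective w hwi.symm
  have hfk : f = ⟨eLab w k, hL.mem_edgeSet w k⟩ := Subtype.ext hwk
  obtain rfl : k = u := huniq k ⟨(mem_localSet _).2 (hfk ▸ hf), hik⟩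
  exact hfk

lemma IsEdgeLabeling.sum_ncard_uniqueNbrs_localSet_le (hL : IsEdgeLabeling G eLab)
    (hZ : IsLineProduct Z eLab H) (T : Set G.edgeSet) :
    ∑ v, (uniqueNbrs H ↑(localSet eLab T v)).ncard ≤
      (uniqueNbrs Z T).ncard + 2 * eInside G ↑(localSupport eLab T) := by
  set S := localSupport eLab T
  set U : V → Finset (Fin D) := fun v => (uniqueNbrs H ↑(localSet eLab T v)).toFinset
  have hsplit (v : V) : (uniqueNbrs H ↑(localSet eLab T v)).ncard =
      #{j ∈ U v | ∀ x ∈ eLab v j, x ∈ S} +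
        #{j ∈ U v | ¬ ∀ x ∈ eLab v j, x ∈ S} := by
    rw [Set.ncard_eq_toFinset_card', card_filter_add_card_filter_not]
  have hinside : ∑ v, #{j ∈ U v | ∀ x ∈ eLab v j, x ∈ S} ≤ 2 * eInside G ↑S :=
    calc ∑ v, #{j ∈ U v | ∀ x ∈ eLab v j, x ∈ S}
        ≤ ∑ v, #(localSet eLab (insideEdges G ↑S) v) := sum_le_sum fun v _ =>
          card_le_card fun j hj => (mem_localSet (hL.mem_edgeSet v j)).2 (mem_filter.1 hj).2
      _ = 2 * eInside G ↑S := by rw [hL.sum_card_localSet, ncard_insideEdges]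
  have hleaving : ∑ v, #{j ∈ U v | ¬ ∀ x ∈ eLab v j, x ∈ S} ≤ (uniqueNbrs Z T).ncard :=
    calc ∑ v, #{j ∈ U v | ¬ ∀ x ∈ eLab v j, x ∈ S}
        = #(univ.sigma fun v => {j ∈ U v | ¬ ∀ x ∈ eLab v j, x ∈ S}) :=
          (card_sigma _ _).symm
      _ ≤ #(uniqueNbrs Z T).toFinset := by
        refine card_le_card_of_injOn (fun p => ⟨eLab p.1 p.2, hL.mem_edgeSet p.1 p.2⟩)
          (fun p hp => ?_) (fun p hp q hq hpq => ?_)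
        · obtain ⟨hjU, hjS⟩ := mem_filter.1 (mem_sigma.1 hp).2
          obtain ⟨x, hx, hxS⟩ := not_forall₂.1 hjS
          exact Set.mem_toFinset.2
            (hL.mem_uniqueNbrs_of_mem_uniqueNbrs_localSet hZ (Set.mem_toFinset.1 hjU) hx hxS)
        · obtain ⟨v, a⟩ := p
          obtain ⟨w, b⟩ := q
          have hab : eLab v a = eLab w b := congrArg Subtype.val hpq
          obtain ⟨haU, haS⟩ := mem_filter.1 (mem_sigma.1 hp).2
          obtain ⟨x, hx, hxS⟩ := not_forall₂.1 haS
          have hvS := mem_localSupport_of_mem_uniqueNbrs (Set.mem_toFinset.1 haU)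
          have hwS := mem_localSupport_of_mem_uniqueNbrs
            (Set.mem_toFinset.1 (mem_filter.1 (mem_sigma.1 hq).2).1)
          obtain rfl : w = v := eq_of_mem_of_mem_of_ne (hL.mem v a) (hab ▸ hL.mem w b) hx
            (ne_of_mem_of_not_mem hvS hxS) (ne_of_mem_of_not_mem hwS hxS)
          obtain rfl := hL.injective w hab
          rfl
      _ = (uniqueNbrs Z T).ncard := (Set.ncard_eq_toFinset_card' _).symm
  simp_rw [hsplit, sum_add_distrib]
  omega

end LineProduct

-- The final count, for `t i = |T_i|` and `u i = |UN_H(T_i)|`.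
lemma mul_sum_le_of_light_heavy {ι : Type*} [Fintype ι] (t u : ι → ℕ) {γ p U : ℝ}
    (hγ : 0 ≤ γ) (hp : 0 ≤ p)
    (hlight : ∀ i, 0 < t i → (t i : ℝ) ≤ 2 * γ → 6 * γ + p * t i / 2 ≤ u i)
    (hheavy : ∑ i ∈ {i | 2 * γ < t i}, (t i : ℝ) ≤
      γ * #{i | 2 * γ < (t i : ℝ)} +
        ∑ i ∈ ({i | 2 * γ < (t i : ℝ)} : Finset ι)ᶜ, (t i : ℝ))
    (hU : ∑ i, (u i : ℝ) ≤ U + γ * #{i | 0 < t i}) :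
    p * ∑ i, (t i : ℝ) ≤ 6 * U := by
  set B : Finset ι := {i | 2 * γ < t i}
  set L : Finset ι := {i | 0 < t i ∧ (t i : ℝ) ≤ 2 * γ}
  have hsupp : (#{i | 0 < t i} : ℝ) ≤ #L + #B := by
    have : ({i | 0 < t i} : Finset ι) ⊆ L ∪ B := fun i hi => by
      simp only [L, B, mem_union, mem_filter, mem_univ, true_and] at hi ⊢
      exact (le_or_gt (t i : ℝ) (2 * γ)).imp (fun h => ⟨hi, h⟩) id
    exact_mod_cast (card_le_card this).trans (card_union_le L B)
  have hBc : ∑ i ∈ Bᶜ, (t i : ℝ) = ∑ i ∈ L, (t i : ℝ) := by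
    refine (sum_subset (fun i hi => ?_) fun i hi hiL => ?_).symm
    · simp only [L, B, mem_compl, mem_filter, mem_univ, true_and, not_lt] at hi ⊢
      exact hi.2
    · simp only [L, B, mem_compl, mem_filter, mem_univ, true_and, not_lt, not_and] at hi hiL
      simpa using Nat.eq_zero_of_not_pos fun h => hiL h hi
  have hLmass : ∑ i ∈ L, (t i : ℝ) ≤ 2 * γ * #L := by
    simpa [mul_comm] using sum_le_card_nsmul L (fun i => (t i : ℝ)) (2 * γ)
      fun i hi => (mem_filter.1 hi).2.2
  have hBmass : 2 * γ * #B ≤ ∑ i ∈ B, (t i : ℝ) := by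
    simpa [mul_comm] using card_nsmul_le_sum B (fun i => (t i : ℝ)) (2 * γ)
      fun i hi => (mem_filter.1 hi).2.le
  have hu : 6 * γ * #L + p / 2 * ∑ i ∈ L, (t i : ℝ) ≤ ∑ i, (u i : ℝ) :=
    calc 6 * γ * #L + p / 2 * ∑ i ∈ L, (t i : ℝ) = ∑ i ∈ L, (6 * γ + p * t i / 2) := by
          rw [sum_add_distrib, mul_sum, sum_const, nsmul_eq_mul]; ring_nf
      _ ≤ ∑ i ∈ L, (u i : ℝ) := sum_le_sum fun i hi =>
          hlight i (mem_filter.1 hi).2.1 (mem_filter.1 hi).2.2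
      _ ≤ ∑ i, (u i : ℝ) :=
          sum_le_sum_of_subset_of_nonneg (subset_univ L) fun _ _ _ => by positivity
  have hheavy' : ∑ i ∈ B, (t i : ℝ) ≤ 2 * ∑ i ∈ L, (t i : ℝ) := by linarith
  rw [← sum_add_sum_compl B]
  nlinarith [mul_le_mul_of_nonneg_left hheavy' hp, mul_nonneg hγ (Nat.cast_nonneg (α := ℝ) #L)]

theorem line_product_expansion_general {V : Type} [Fintype V]
    (γ ε : ℝ) (hγ : 1 / 2 ≤ γ)
    (G : SimpleGraph V) (D : ℕ)
    (hreg : ∀ v, deg G v = D)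
    (eLab : V → Fin D → Sym2 V)
    (hLab_mem : ∀ v i, eLab v i ∈ G.edgeSet ∧ v ∈ eLab v i)
    (hLab_inj : ∀ v, Function.Injective (eLab v))
    (H : SimpleGraph (Fin D))
    (Z : SimpleGraph G.edgeSet)
    (hZ : ∀ e f : G.edgeSet, Z.Adj e f ↔
      ∃ (v : V) (i j : Fin D), H.Adj i j ∧ (e : Sym2 V) = eLab v i ∧ (f : Sym2 V) = eLab v j)
    (hG : ∀ S : Set V, (S.ncard : ℝ) ≤ ε * (Fintype.card V : ℝ) →
      2 * (eInside G S : ℝ) ≤ γ * (S.ncard : ℝ))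
    (hH : ∀ t : ℝ, 1 ≤ t → t ≤ 2 * γ → 12 * γ / t ≤ profile H t) :
    ∀ T : Set G.edgeSet, T.Nonempty →
      (T.ncard : ℝ) ≤ (ε / (D : ℝ)) * (Nat.card G.edgeSet : ℝ) →
      (profile H (2 * γ) / 3) * (T.ncard : ℝ) ≤ ((uniqueNbrs Z T).ncard : ℝ) := by
  intro T hT hTcard
  have hL := IsEdgeLabeling.of_regular hreg hLab_mem hLab_inj
  have hsum : ∑ v, #(localSet eLab T v) = 2 * T.ncard := hL.sum_card_localSet T
  have hsize := two_mul_ncard_le_of_regular hreg hT hTcard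
  have hsparse (W : Finset V) (hW : W ⊆ localSupport eLab T) :
      2 * (eInside G ↑W : ℝ) ≤ γ * #W := by
    have : (#W : ℝ) ≤ 2 * T.ncard := by
      exact_mod_cast (card_le_card hW).trans ((card_localSupport_le T).trans hsum.le)
    simpa using hG W (by rw [Set.ncard_coe_finset]; linarith)
  have hsupp : ({v | 0 < #(localSet eLab T v)} : Finset V) = localSupport eLab T :=
    filter_congr fun v _ => card_pos
  have key := mul_sum_le_of_light_heavy (fun v => #(localSet eLab T v))
    (fun v => (uniqueNbrs H ↑(localSet eLab T v)).ncard) (U := (uniqueNbrs Z T).ncard)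
    (by linarith : 0 ≤ γ) (profile_nonneg H _)
    (fun v hv hvγ => by
      simpa only [Set.ncard_coe_finset] using add_le_ncard_uniqueNbrs hH
        (coe_nonempty.2 (card_pos.1 hv)) (by rwa [Set.ncard_coe_finset]))
    (by
      set B : Finset V := {v | 2 * γ < #(localSet eLab T v)}
      have hB : B ⊆ localSupport eLab T := fun v hv => hsupp ▸ mem_filter.2 ⟨mem_univ _, by
        exact_mod_cast (by linarith [(mem_filter.1 hv).2] : (0 : ℝ) < #(localSet eLab T v))⟩
      have hheavy := hL.sum_card_localSet_le T B
      rify at hheavy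
      linarith [hsparse B hB])
    (by
      have hUN := hL.sum_ncard_uniqueNbrs_localSet_le hZ T
      have hS := hsparse _ subset_rfl
      rw [hsupp]
      rify at hUN
      linarith)
  rw [show ∑ v, (#(localSet eLab T v) : ℝ) = 2 * T.ncard by exact_mod_cast hsum] at key
  linarith

/-- **Expansion profile of the line product** (Lemma `lem:line-analysis`).
`G` is a `D`-regular graph whose edges at each vertex `v` are labeled by `Fin D`
via `eLab v`; `H` is a graph on `Fin D`; `Z` is the line product `G ◇ H`, a graph on the
edge set of `G` in which `eLab v i` and `eLab v j` are joined whenever `{i,j} ∈ E(H)`.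
If small sets in `G` span few edges and `P_H(t) ≥ 12γ/t` for `1 ≤ t ≤ 2γ`, then every
nonempty `T ⊆ V(Z)` with `|T| ≤ (ε/D)|V(Z)|` has at least `(P_H(2γ)/3)·|T|`
unique-neighbors. -/
theorem line_product_expansion {V : Type} [Fintype V]
    (γ ε : ℝ) (hγ : 1 / 2 ≤ γ) (hε0 : 0 < ε) (hε1 : ε < 1)
    (G : SimpleGraph V) (D : ℕ)
    (hreg : ∀ v, deg G v = D)
    (eLab : V → Fin D → Sym2 V)
    (hLab_mem : ∀ v i, eLab v i ∈ G.edgeSet ∧ v ∈ eLab v i)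
    (hLab_inj : ∀ v, Function.Injective (eLab v))
    (H : SimpleGraph (Fin D))
    (Z : SimpleGraph G.edgeSet)
    (hZ : ∀ e f : G.edgeSet, Z.Adj e f ↔
      ∃ (v : V) (i j : Fin D), H.Adj i j ∧ (e : Sym2 V) = eLab v i ∧ (f : Sym2 V) = eLab v j)
    (hG : ∀ S : Set V, (S.ncard : ℝ) ≤ ε * (Fintype.card V : ℝ) →
      2 * (eInside G S : ℝ) ≤ γ * (S.ncard : ℝ))
    (hH : ∀ t : ℝ, 1 ≤ t → t ≤ 2 * γ → 12 * γ / t ≤ profile H t) :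
    ∀ T : Set G.edgeSet, T.Nonempty →
      (T.ncard : ℝ) ≤ (ε / (D : ℝ)) * (Nat.card G.edgeSet : ℝ) →
      (profile H (2 * γ) / 3) * (T.ncard : ℝ) ≤ ((uniqueNbrs Z T).ncard : ℝ) :=
  line_product_expansion_general γ ε hγ G D hreg eLab hLab_mem hLab_inj H Z hZ hG hH

end UNE
end
end

section
/- Let G be a finite graph and let T be a tree extension of G, i.e. T is obtained from G by attaching to each vertex r of G a finite rooted tree T_r with root r, where the trees are pairwise disjoint, each tree meets V(G) only in its root, and T has no edges other than the edges of G and the edges of the trees. For x ∈ V(T), let depth(x) be the distance in T_x's tree from x to its root. Let t ∈ ℝ and f : V(G) → ℝ, and define the extension f_t : V(T) → ℝ by f_t(x) = f(r)·t^{depth(x)} when x lies in the tree T_r rooted at r. Then (H_T(t)·f_t)(x) = (H_G(t)·f)(x) for every x ∈ V(G), and (H_T(t)·f_t)(x) = 0 for every x ∈ V(T) \ V(G). -/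
open scoped Classical

noncomputable section

namespace UNE

/-- `T` (on vertex type `W`) is a tree extension of `G` (on `V`): it is obtained from `G`
by attaching to each vertex `r` of `G` a rooted tree with root `r`; `ι` embeds `V` into
`W`, `root x` is the root of the tree containing `x`, and `depth x` is the distance from
`x` to its root. -/
structure IsTreeExtension {V W : Type*} (G : SimpleGraph V) (T : SimpleGraph W)
    (ι : V → W) (root : W → V) (depth : W → ℕ) : Prop where
  inj : Function.Injective ι
  depth_base : ∀ v, depth (ι v) = 0
  root_base : ∀ v, root (ι v) = v
  adj_base : ∀ u v : V, T.Adj (ι u) (ι v) ↔ G.Adj u v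
  depth_pos : ∀ x : W, (∀ v, x ≠ ι v) → 0 < depth x
  adj_tree : ∀ x y : W, T.Adj x y → 0 < depth x →
    root y = root x ∧ (depth y + 1 = depth x ∨ depth x + 1 = depth y)
  parent_unique : ∀ x : W, 0 < depth x → ∃! y, T.Adj x y ∧ depth y + 1 = depth x

/- The extension `g x = f (root x) · t ^ depth x` is multiplied by `t` along every edge going
away from the roots, so every edge from `x` to a child `y` contributes `t · g x - g y = 0` to
`(H_T g)(x) = (1 - t²) g x + t ∑_{y ∼ x} (t g x - g y)`. At a root only the edges of `G`
survive, giving `(H_G f)(v)`; at a non-root `x` with parent `p` only the parent edge survives,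
and `g x = t g p` makes the two terms cancel. -/

lemma deg_eq_sum_ite {V : Type*} [Fintype V] (G : SimpleGraph V) (x : V) :
    (deg G x : ℝ) = ∑ y, if G.Adj x y then 1 else 0 := by
  rw [Finset.sum_boole, deg, Set.ncard_eq_toFinset_card']
  simp

lemma betheHessian_mulVec_apply {V : Type*} [Fintype V] (G : SimpleGraph V) (t : ℝ)
    (g : V → ℝ) (x : V) :
    (betheHessian G t).mulVec g x =
      (1 - t ^ 2) * g x + t * ∑ y, if G.Adj x y then t * g x - g y else 0 := by
  have hadj : (adjMat G).mulVec g x = ∑ y, if G.Adj x y then g y else 0 := by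
    simp [adjMat, Matrix.mulVec, dotProduct, ite_mul]
  have hsplit : ∀ y, (if G.Adj x y then t * g x - g y else 0) =
      t * g x * (if G.Adj x y then 1 else 0) - (if G.Adj x y then g y else 0) := by
    intro y; split_ifs <;> ring
  simp only [betheHessian, degMat, ← Matrix.diagonal_one, Matrix.add_mulVec, Matrix.sub_mulVec,
    Matrix.smul_mulVec, Matrix.mulVec_diagonal, Pi.add_apply, Pi.sub_apply, Pi.smul_apply,
    smul_eq_mul, hadj, hsplit, Finset.sum_sub_distrib, ← Finset.mul_sum, ← deg_eq_sum_ite]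
  ring

namespace IsTreeExtension

variable {V W : Type*} {G : SimpleGraph V} {T : SimpleGraph W} {ι : V → W} {root : W → V}
  {depth : W → ℕ}

lemma extension_apply_child (hext : IsTreeExtension G T ι root depth) {x y : W} (hxy : T.Adj x y)
    (hdepth : depth y = depth x + 1) (t : ℝ) (f : V → ℝ) :
    f (root y) * t ^ depth y = t * (f (root x) * t ^ depth x) := by
  rw [(hext.adj_tree y x hxy.symm (by omega)).1, hdepth, pow_succ]
  ring

lemma depth_eq_succ_of_adj_base (hext : IsTreeExtension G T ι root depth) {v : V} {y : W}
    (hvy : T.Adj (ι v) y) (hy : ∀ u, y ≠ ι u) : depth y = depth (ι v) + 1 := by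
  have := (hext.adj_tree y (ι v) hvy.symm (hext.depth_pos y hy)).2
  rw [hext.depth_base] at this ⊢
  omega

lemma sum_adj_base [Fintype V] [Fintype W] (hext : IsTreeExtension G T ι root depth)
    (t : ℝ) (f : V → ℝ) (v : V) :
    (∑ y, if T.Adj (ι v) y then
        t * (f (root (ι v)) * t ^ depth (ι v)) - f (root y) * t ^ depth y else 0) =
      ∑ u, if G.Adj v u then t * f v - f u else 0 := by
  have hchildren : ∀ y ∈ Finset.univ, y ∉ Finset.univ.image ι →
      (if T.Adj (ι v) y then
        t * (f (root (ι v)) * t ^ depth (ι v)) - f (root y) * t ^ depth y else 0) = 0 := by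
    intro y _ hy
    split_ifs with hvy
    · have hy' : ∀ u, y ≠ ι u := fun u h => hy (by simp [h])
      rw [hext.extension_apply_child hvy (hext.depth_eq_succ_of_adj_base hvy hy'), sub_self]
    · rfl
  rw [← Finset.sum_subset (Finset.subset_univ _) hchildren,
    Finset.sum_image fun a _ b _ h => hext.inj h]
  simp [hext.adj_base, hext.root_base, hext.depth_base]

lemma sum_adj_of_parent [Fintype W] (hext : IsTreeExtension G T ι root depth) {x p : W}
    (hx : 0 < depth x) (hxp : T.Adj x p) (hp : depth p + 1 = depth x) (t : ℝ) (f : V → ℝ) :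
    (∑ y, if T.Adj x y then
        t * (f (root x) * t ^ depth x) - f (root y) * t ^ depth y else 0) =
      t * (f (root x) * t ^ depth x) - f (root p) * t ^ depth p := by
  rw [Finset.sum_eq_single p _ (fun h => absurd (Finset.mem_univ p) h), if_pos hxp]
  intro y _ hyp
  split_ifs with hxy
  · have hchild : depth y = depth x + 1 := by
      rcases (hext.adj_tree x y hxy hx).2 with h | h
      · exact absurd ((hext.parent_unique x hx).unique ⟨hxy, h⟩ ⟨hxp, hp⟩) hyp
      · exact h.symm
    rw [hext.extension_apply_child hxy hchild, sub_self]
  · rfl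

end IsTreeExtension

/-- Lemma `lem:H-TG`: for a tree extension `T` of `G` and the extension
`f_t(x) = f(root x)·t^(depth x)` of `f : V(G) → ℝ`, the Bethe Hessian of `T` applied to
`f_t` agrees with the Bethe Hessian of `G` applied to `f` on `V(G)` and vanishes
elsewhere. -/
theorem bethe_hessian_tree_extension {V W : Type} [Fintype V] [Fintype W]
    (G : SimpleGraph V) (T : SimpleGraph W)
    (ι : V → W) (root : W → V) (depth : W → ℕ)
    (hext : IsTreeExtension G T ι root depth)
    (t : ℝ) (f : V → ℝ) :
    (∀ v : V,
      (betheHessian T t).mulVec (fun x => f (root x) * t ^ depth x) (ι v) =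
        (betheHessian G t).mulVec f v) ∧
    (∀ x : W, (∀ v, x ≠ ι v) →
      (betheHessian T t).mulVec (fun x => f (root x) * t ^ depth x) x = 0) := by
  refine ⟨fun v => ?_, fun x hx => ?_⟩
  · rw [betheHessian_mulVec_apply, betheHessian_mulVec_apply, hext.sum_adj_base t f v,
      hext.root_base, hext.depth_base, pow_zero, mul_one]
  · have hdepth : 0 < depth x := hext.depth_pos x hx
    obtain ⟨p, ⟨hxp, hp⟩, -⟩ := hext.parent_unique x hdepth
    have hroot : root p = root x := (hext.adj_tree x p hxp hdepth).1
    rw [betheHessian_mulVec_apply, hext.sum_adj_of_parent hdepth hxp hp, hroot, ← hp, pow_succ]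
    ring

end UNE
end
end

section
/- Let T and G be finite graphs and let σ : V(T) → V(G) be a graph homomorphism (σ maps every edge of T to an edge of G) such that any two distinct edges of T sharing a vertex are mapped to distinct edges of G. For f : V(T) → ℝ define the folded function f̃ : V(G) → ℝ by f̃(v) = (Σ_{x ∈ σ^{-1}(v)} f(x)²)^{1/2}. Then ⟨f, A_T f⟩ ≤ ⟨f̃, A_G f̃⟩, where A_T, A_G are the adjacency matrices of T and G. -/
open scoped Classical

noncomputable section

namespace UNE

/-!
Group the vertices of `T` into the fibres `σ⁻¹(u)`. The `T`-edges running from the fibre of `u`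
to the fibre of `v` exist only when `uv` is an edge of `G`, and they form a partial matching
between the two fibres: two of them sharing an endpoint would be distinct edges with a common
vertex and the same image. Cauchy–Schwarz over a partial matching bounds their contribution
to `⟨f, A_T f⟩` by `f̃(u) f̃(v)`.
-/

lemma adjMat_dotProduct_mulVec {n : Type} [Fintype n] (H : SimpleGraph n) (g : n → ℝ) :
    dotProduct g ((adjMat H).mulVec g) = ∑ u, ∑ v, if H.Adj u v then g u * g v else 0 := by
  simp only [dotProduct, Matrix.mulVec, adjMat, Matrix.of_apply, Finset.mul_sum]
  refine Finset.sum_congr rfl fun u _ => Finset.sum_congr rfl fun v _ => ?_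
  split_ifs <;> ring

lemma sum_sum_eq_sum_sum_fiberwise {W V M : Type*} [Fintype W] [Fintype V] [AddCommMonoid M]
    (σ : W → V) (φ : W → W → M) :
    ∑ x, ∑ y, φ x y = ∑ u, ∑ v, ∑ x ∈ Finset.univ.filter (fun x => σ x = u),
      ∑ y ∈ Finset.univ.filter (fun y => σ y = v), φ x y := by
  rw [← Finset.sum_fiberwise Finset.univ σ]
  refine Finset.sum_congr rfl fun u _ => ?_
  rw [eq_comm, Finset.sum_comm]
  exact Finset.sum_congr rfl fun x _ => Finset.sum_fiberwise Finset.univ σ (φ x)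

lemma sum_sq_comp_le_of_injOn {ι α : Type*} {P : Finset ι} {s : Finset α} {π : ι → α}
    (hinj : Set.InjOn π P) (hmaps : Set.MapsTo π P s) (f : α → ℝ) :
    ∑ p ∈ P, f (π p) ^ 2 ≤ ∑ a ∈ s, f a ^ 2 := by
  rw [← Finset.sum_image (f := fun a => f a ^ 2) hinj]
  exact Finset.sum_le_sum_of_subset_of_nonneg (Finset.image_subset_iff.mpr hmaps)
    fun _ _ _ => sq_nonneg _

lemma sum_mul_le_sqrt_mul_sqrt_of_injOn {α β : Type*} {P : Finset (α × β)} {s : Finset α}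
    {t : Finset β} (hfst : Set.InjOn (Prod.fst : α × β → α) P)
    (hsnd : Set.InjOn (Prod.snd : α × β → β) P) (hs : Set.MapsTo (Prod.fst : α × β → α) P s)
    (ht : Set.MapsTo (Prod.snd : α × β → β) P t) (f : α → ℝ) (g : β → ℝ) :
    ∑ p ∈ P, f p.1 * g p.2 ≤ √(∑ a ∈ s, f a ^ 2) * √(∑ b ∈ t, g b ^ 2) :=
  (Real.sum_mul_le_sqrt_mul_sqrt P _ _).trans <|
    mul_le_mul (Real.sqrt_le_sqrt (sum_sq_comp_le_of_injOn hfst hs f))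
      (Real.sqrt_le_sqrt (sum_sq_comp_le_of_injOn hsnd ht g)) (Real.sqrt_nonneg _)
      (Real.sqrt_nonneg _)

section Folding

variable {W V : Type} {T : SimpleGraph W} {σ : W → V}

def InjOnAdjacentEdges (T : SimpleGraph W) (σ : W → V) : Prop :=
  ∀ e₁ e₂ : Sym2 W, e₁ ∈ T.edgeSet → e₂ ∈ T.edgeSet → e₁ ≠ e₂ →
    (∃ x : W, x ∈ e₁ ∧ x ∈ e₂) → Sym2.map σ e₁ ≠ Sym2.map σ e₂

lemma InjOnAdjacentEdges.eq_of_adj_of_adj_of_map_eq (hedge : InjOnAdjacentEdges T σ)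
    {x y y' : W} (hy : T.Adj x y) (hy' : T.Adj x y') (hσ : σ y = σ y') : y = y' := by
  by_contra hne
  refine hedge s(x, y) s(x, y') hy hy' (fun h => hne (Sym2.congr_right.mp h))
    ⟨x, Sym2.mem_mk_left _ _, Sym2.mem_mk_left _ _⟩ ?_
  simp [hσ]

variable [Fintype W]

lemma InjOnAdjacentEdges.sum_fiber_adj_le_sqrt_mul_sqrt (hedge : InjOnAdjacentEdges T σ)
    (f : W → ℝ) (u v : V) :
    ∑ x ∈ Finset.univ.filter (fun x => σ x = u), ∑ y ∈ Finset.univ.filter (fun y => σ y = v),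
        (if T.Adj x y then f x * f y else 0) ≤
      √(∑ x ∈ Finset.univ.filter (fun x => σ x = u), f x ^ 2) *
        √(∑ y ∈ Finset.univ.filter (fun y => σ y = v), f y ^ 2) := by
  set P := (Finset.univ.filter (fun x => σ x = u) ×ˢ Finset.univ.filter (fun y => σ y = v)).filter
    fun p : W × W => T.Adj p.1 p.2
  have hP : ∀ p ∈ P, σ p.1 = u ∧ σ p.2 = v ∧ T.Adj p.1 p.2 := fun p hp => by
    simp only [P, Finset.mem_filter, Finset.mem_product, Finset.mem_univ, true_and] at hp
    exact ⟨hp.1.1, hp.1.2, hp.2⟩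
  rw [← Finset.sum_product', ← Finset.sum_filter]
  refine sum_mul_le_sqrt_mul_sqrt_of_injOn ?_ ?_ ?_ ?_ f f
  · intro p hp q hq h
    obtain ⟨-, hp₂, hpT⟩ := hP p hp
    obtain ⟨-, hq₂, hqT⟩ := hP q hq
    exact Prod.ext h (hedge.eq_of_adj_of_adj_of_map_eq hpT (h ▸ hqT) (hp₂.trans hq₂.symm))
  · intro p hp q hq h
    obtain ⟨hp₁, -, hpT⟩ := hP p hp
    obtain ⟨hq₁, -, hqT⟩ := hP q hq
    exact Prod.ext (hedge.eq_of_adj_of_adj_of_map_eq hpT.symm (h ▸ hqT.symm)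
      (hp₁.trans hq₁.symm)) h
  · exact fun p hp => by simp [(hP p hp).1]
  · exact fun p hp => by simp [(hP p hp).2.1]

lemma sum_fiber_adj_eq_zero {G : SimpleGraph V} (hhom : ∀ x y : W, T.Adj x y → G.Adj (σ x) (σ y))
    (f : W → ℝ) {u v : V} (huv : ¬G.Adj u v) :
    ∑ x ∈ Finset.univ.filter (fun x => σ x = u), ∑ y ∈ Finset.univ.filter (fun y => σ y = v),
      (if T.Adj x y then f x * f y else 0) = 0 := by
  refine Finset.sum_eq_zero fun x hx => Finset.sum_eq_zero fun y hy => if_neg fun hxy => huv ?_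
  simpa [(Finset.mem_filter.mp hx).2, (Finset.mem_filter.mp hy).2] using hhom x y hxy

end Folding

/-- **Folding a quadratic form** (Lemma `lem:folded-quadratic-form`): if `σ : T → G` is a
graph homomorphism mapping distinct edges sharing a vertex to distinct edges, then the
adjacency quadratic form of `f` on `T` is at most that of the folded function
`f̃(v) = (Σ_{σ(x)=v} f(x)²)^{1/2}` on `G`. -/
theorem folded_quadratic_form {W V : Type} [Fintype W] [Fintype V]
    (T : SimpleGraph W) (G : SimpleGraph V) (σ : W → V)
    (hhom : ∀ x y : W, T.Adj x y → G.Adj (σ x) (σ y))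
    (hedge : ∀ e₁ e₂ : Sym2 W, e₁ ∈ T.edgeSet → e₂ ∈ T.edgeSet → e₁ ≠ e₂ →
      (∃ x : W, x ∈ e₁ ∧ x ∈ e₂) → Sym2.map σ e₁ ≠ Sym2.map σ e₂)
    (f : W → ℝ) :
    dotProduct f ((adjMat T).mulVec f) ≤
      dotProduct
        (fun v => Real.sqrt (∑ x ∈ Finset.univ.filter (fun x => σ x = v), f x ^ 2))
        ((adjMat G).mulVec
          (fun v => Real.sqrt (∑ x ∈ Finset.univ.filter (fun x => σ x = v), f x ^ 2))) := by
  rw [adjMat_dotProduct_mulVec, adjMat_dotProduct_mulVec, sum_sum_eq_sum_sum_fiberwise σ]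
  refine Finset.sum_le_sum fun u _ => Finset.sum_le_sum fun v _ => ?_
  split_ifs with huv
  · exact InjOnAdjacentEdges.sum_fiber_adj_le_sqrt_mul_sqrt hedge f u v
  · exact (sum_fiber_adj_eq_zero hhom f huv).le

end UNE
end
end

section
/- Let G be a finite graph on n vertices. For s ∈ ℕ let A^{(s)} be the n×n matrix whose (u,v) entry is the number of non-backtracking walks of length s from u to v in G, i.e. walks u = w₀, w₁, …, w_s = v with w_i adjacent to w_{i+1} for all i and w_{i+1} ≠ w_{i−1} for 1 ≤ i ≤ s−1. Let s ≥ k ≥ 1 be integers and write s = qk + r with 0 ≤ r < k. Then tr(A^{(s)}) ≤ √n · ‖A^{(k)}‖₂^q · ‖A^{(r)}‖_F, where ‖·‖₂ is the spectral (operator) norm and ‖·‖_F the Frobenius norm. -/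
open scoped Classical

noncomputable section

namespace UNE

/-- Number of non-backtracking walks of length `s` from `u` to `v` in `G`. -/
def nbWalkCount {V : Type*} (G : SimpleGraph V) (s : ℕ) (u v : V) : ℕ :=
  {w : Fin (s + 1) → V |
    w ⟨0, by omega⟩ = u ∧ w ⟨s, by omega⟩ = v ∧
    (∀ i : ℕ, ∀ h : i + 1 ≤ s, G.Adj (w ⟨i, by omega⟩) (w ⟨i + 1, by omega⟩)) ∧
    (∀ i : ℕ, ∀ h : i + 2 ≤ s, w ⟨i + 2, by omega⟩ ≠ w ⟨i, by omega⟩)}.ncard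

/-- The matrix `A^{(s)}` counting non-backtracking walks of length `s`. -/
def nbWalkMatrix {V : Type*} (G : SimpleGraph V) (s : ℕ) : Matrix V V ℝ :=
  Matrix.of fun u v => (nbWalkCount G s u v : ℝ)

/-- Euclidean norm of a vector. -/
def euclNorm {n : Type*} [Fintype n] (x : n → ℝ) : ℝ :=
  Real.sqrt (∑ i, x i ^ 2)

/-- Spectral (ℓ₂ operator) norm of a square real matrix. -/
def specNorm {n : Type*} [Fintype n] (A : Matrix n n ℝ) : ℝ :=
  sSup {r | ∃ x : n → ℝ, euclNorm x = 1 ∧ r = euclNorm (A.mulVec x)}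

/-- Frobenius norm of a square real matrix. -/
def frobNorm {n : Type*} [Fintype n] (A : Matrix n n ℝ) : ℝ :=
  Real.sqrt (∑ u, ∑ v, A u v ^ 2)

/-!
Cutting a non-backtracking walk of length `a + b` after `a` steps leaves two non-backtracking
walks, so `A^{(a+b)} ≤ A^{(a)} A^{(b)}` entrywise and hence `A^{(s)} ≤ (A^{(k)})^q A^{(r)}`.
By Cauchy–Schwarz on the diagonal, `tr D ≤ √n ‖D‖_F`; and `‖B^q C‖_F ≤ ‖B‖₂^q ‖C‖_F`
because `B` acts on each column of `C` separately.
-/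

open Matrix

section Walks

variable {V : Type*}

def nbWalkSet (G : SimpleGraph V) (s : ℕ) (u v : V) : Set (Fin (s + 1) → V) :=
  {w : Fin (s + 1) → V |
    w ⟨0, by omega⟩ = u ∧ w ⟨s, by omega⟩ = v ∧
    (∀ i : ℕ, ∀ h : i + 1 ≤ s, G.Adj (w ⟨i, by omega⟩) (w ⟨i + 1, by omega⟩)) ∧
    (∀ i : ℕ, ∀ h : i + 2 ≤ s, w ⟨i + 2, by omega⟩ ≠ w ⟨i, by omega⟩)}

lemma nbWalkCount_eq_ncard (G : SimpleGraph V) (s : ℕ) (u v : V) :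
    nbWalkCount G s u v = (nbWalkSet G s u v).ncard := rfl

lemma nbWalkCount_add_le [Fintype V] (G : SimpleGraph V) (a b : ℕ) (u v : V) :
    nbWalkCount G (a + b) u v ≤ ∑ w, nbWalkCount G a u w * nbWalkCount G b w v := by
  let split (f : Fin (a + b + 1) → V) : (Fin (a + 1) → V) × (Fin (b + 1) → V) :=
    (fun j => f ⟨j, by omega⟩, fun j => f ⟨a + j, by omega⟩)
  have maps_to : ∀ f ∈ nbWalkSet G (a + b) u v,
      split f ∈ ⋃ w, nbWalkSet G a u w ×ˢ nbWalkSet G b w v := by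
    rintro f ⟨rfl, rfl, hadj, hnb⟩
    exact Set.mem_iUnion.2 ⟨f ⟨a, by omega⟩,
      ⟨rfl, rfl, fun i _ => hadj i (by omega), fun i _ => hnb i (by omega)⟩,
      ⟨rfl, rfl, fun i _ => hadj (a + i) (by omega), fun i _ => hnb (a + i) (by omega)⟩⟩
  have split_injOn : Set.InjOn split (nbWalkSet G (a + b) u v) := by
    intro f _ g _ hfg
    funext ⟨i, hi⟩
    rcases le_or_gt i a with hia | hia
    · exact congrFun (congrArg Prod.fst hfg) ⟨i, by omega⟩
    · obtain ⟨j, rfl⟩ := Nat.exists_eq_add_of_le hia.le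
      exact congrFun (congrArg Prod.snd hfg) ⟨j, by omega⟩
  calc nbWalkCount G (a + b) u v
      ≤ (⋃ w, nbWalkSet G a u w ×ˢ nbWalkSet G b w v).ncard :=
        Set.ncard_le_ncard_of_injOn split maps_to split_injOn
    _ ≤ ∑ w, (nbWalkSet G a u w ×ˢ nbWalkSet G b w v).ncard := Set.ncard_iUnion_le_of_fintype _
    _ = ∑ w, nbWalkCount G a u w * nbWalkCount G b w v := by
        simp only [Set.ncard_prod, nbWalkCount_eq_ncard]

lemma nbWalkMatrix_nonneg (G : SimpleGraph V) (s : ℕ) (u v : V) : 0 ≤ nbWalkMatrix G s u v :=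
  Nat.cast_nonneg _

lemma nbWalkMatrix_add_le [Fintype V] (G : SimpleGraph V) (a b : ℕ) (u v : V) :
    nbWalkMatrix G (a + b) u v ≤ (nbWalkMatrix G a * nbWalkMatrix G b) u v := by
  simpa [nbWalkMatrix, mul_apply] using (Nat.cast_le (α := ℝ)).2 (nbWalkCount_add_le G a b u v)

lemma nbWalkMatrix_le_pow_mul [Fintype V] (G : SimpleGraph V) (k r q : ℕ) (u v : V) :
    nbWalkMatrix G (q * k + r) u v ≤ (nbWalkMatrix G k ^ q * nbWalkMatrix G r) u v := by
  induction q generalizing u with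
  | zero => simp
  | succ q ih =>
    calc nbWalkMatrix G ((q + 1) * k + r) u v = nbWalkMatrix G (k + (q * k + r)) u v := by
          rw [add_mul, one_mul, add_comm (q * k) k, add_assoc]
      _ ≤ ∑ w, nbWalkMatrix G k u w * nbWalkMatrix G (q * k + r) w v :=
          nbWalkMatrix_add_le G k (q * k + r) u v
      _ ≤ ∑ w, nbWalkMatrix G k u w * (nbWalkMatrix G k ^ q * nbWalkMatrix G r) w v := by
          gcongr with w
          exacts [nbWalkMatrix_nonneg G k u w, ih w]
      _ = (nbWalkMatrix G k ^ (q + 1) * nbWalkMatrix G r) u v := by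
          rw [pow_succ', Matrix.mul_assoc, mul_apply]

end Walks

section Norms

variable {n : Type*} [Fintype n]

lemma euclNorm_eq_norm (x : n → ℝ) : euclNorm x = ‖WithLp.toLp 2 x‖ := by
  simp [euclNorm, EuclideanSpace.norm_eq]

lemma specNorm_eq_norm_toEuclideanCLM (A : Matrix n n ℝ) :
    specNorm A = ‖toEuclideanCLM (n := n) (𝕜 := ℝ) A‖ := by
  rw [← ContinuousLinearMap.sSup_sphere_eq_norm, specNorm]
  congr 1
  ext r
  simp only [Set.mem_image, mem_sphere_zero_iff_norm, euclNorm_eq_norm]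
  constructor
  · rintro ⟨x, hx, rfl⟩
    exact ⟨WithLp.toLp 2 x, hx, rfl⟩
  · rintro ⟨y, hy, rfl⟩
    exact ⟨WithLp.ofLp y, hy, rfl⟩

lemma euclNorm_mulVec_le (A : Matrix n n ℝ) (x : n → ℝ) :
    euclNorm (A *ᵥ x) ≤ specNorm A * euclNorm x := by
  simpa [euclNorm_eq_norm, specNorm_eq_norm_toEuclideanCLM] using
    (toEuclideanCLM (n := n) (𝕜 := ℝ) A).le_opNorm (WithLp.toLp 2 x)

lemma specNorm_nonneg (A : Matrix n n ℝ) : 0 ≤ specNorm A := by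
  rw [specNorm_eq_norm_toEuclideanCLM]
  exact norm_nonneg _

lemma euclNorm_nonneg (x : n → ℝ) : 0 ≤ euclNorm x := Real.sqrt_nonneg _

lemma frobNorm_nonneg (A : Matrix n n ℝ) : 0 ≤ frobNorm A := Real.sqrt_nonneg _

lemma frobNorm_sq_eq_sum_euclNorm_transpose_sq (A : Matrix n n ℝ) :
    frobNorm A ^ 2 = ∑ v, euclNorm (Aᵀ v) ^ 2 := by
  rw [frobNorm, Real.sq_sqrt (by positivity), Finset.sum_comm]
  refine Finset.sum_congr rfl fun v _ => ?_
  rw [euclNorm, Real.sq_sqrt (by positivity)]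
  rfl

lemma transpose_mul_apply_eq_mulVec (A B : Matrix n n ℝ) (v : n) :
    (A * B)ᵀ v = A *ᵥ Bᵀ v := by
  ext u
  simp [mul_apply, mulVec, dotProduct]

lemma frobNorm_mul_le (A B : Matrix n n ℝ) : frobNorm (A * B) ≤ specNorm A * frobNorm B := by
  refine (pow_le_pow_iff_left₀ (frobNorm_nonneg _)
    (mul_nonneg (specNorm_nonneg A) (frobNorm_nonneg B)) two_ne_zero).1 ?_
  calc frobNorm (A * B) ^ 2 = ∑ v, euclNorm (A *ᵥ Bᵀ v) ^ 2 := by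
        simp only [frobNorm_sq_eq_sum_euclNorm_transpose_sq, transpose_mul_apply_eq_mulVec]
    _ ≤ ∑ v, (specNorm A * euclNorm (Bᵀ v)) ^ 2 := by
        gcongr with v
        exacts [euclNorm_nonneg _, euclNorm_mulVec_le A _]
    _ = (specNorm A * frobNorm B) ^ 2 := by
        simp only [mul_pow, frobNorm_sq_eq_sum_euclNorm_transpose_sq, Finset.mul_sum]

lemma frobNorm_pow_mul_le (A B : Matrix n n ℝ) (q : ℕ) :
    frobNorm (A ^ q * B) ≤ specNorm A ^ q * frobNorm B := by
  induction q with
  | zero => simp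
  | succ q ih =>
    calc frobNorm (A ^ (q + 1) * B) ≤ specNorm A * frobNorm (A ^ q * B) := by
          rw [pow_succ', Matrix.mul_assoc]
          exact frobNorm_mul_le A _
      _ ≤ specNorm A * (specNorm A ^ q * frobNorm B) := by gcongr; exact specNorm_nonneg A
      _ = specNorm A ^ (q + 1) * frobNorm B := by ring

lemma trace_le_sqrt_card_mul_frobNorm (A : Matrix n n ℝ) :
    A.trace ≤ √(Fintype.card n) * frobNorm A := by
  have cauchy_schwarz : A.trace ^ 2 ≤ Fintype.card n * ∑ u, A u u ^ 2 := by
    simpa [trace] using sq_sum_le_card_mul_sum_sq (s := Finset.univ) (f := fun u => A u u)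
  have diag_le : ∑ u, A u u ^ 2 ≤ ∑ u, ∑ v, A u v ^ 2 :=
    Finset.sum_le_sum fun u _ =>
      Finset.single_le_sum (fun v _ => sq_nonneg (A u v)) (Finset.mem_univ u)
  calc A.trace ≤ √(Fintype.card n * ∑ u, A u u ^ 2) :=
        (le_abs_self _).trans (Real.abs_le_sqrt cauchy_schwarz)
    _ ≤ √(Fintype.card n * ∑ u, ∑ v, A u v ^ 2) := by gcongr
    _ = √(Fintype.card n) * frobNorm A := Real.sqrt_mul (Nat.cast_nonneg _) _

end Norms

theorem trace_nb_walk_matrix_le_general {V : Type} [Fintype V] (G : SimpleGraph V)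
    (s k q r : ℕ) (hs : s = q * k + r) :
    (nbWalkMatrix G s).trace ≤
      Real.sqrt (Fintype.card V) * specNorm (nbWalkMatrix G k) ^ q *
        frobNorm (nbWalkMatrix G r) := by
  subst hs
  calc (nbWalkMatrix G (q * k + r)).trace
      ≤ (nbWalkMatrix G k ^ q * nbWalkMatrix G r).trace :=
        Finset.sum_le_sum fun u _ => nbWalkMatrix_le_pow_mul G k r q u u
    _ ≤ √(Fintype.card V) * frobNorm (nbWalkMatrix G k ^ q * nbWalkMatrix G r) :=
        trace_le_sqrt_card_mul_frobNorm _
    _ ≤ √(Fintype.card V) * (specNorm (nbWalkMatrix G k) ^ q * frobNorm (nbWalkMatrix G r)) := by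
        gcongr
        exact frobNorm_pow_mul_le _ _ q
    _ = √(Fintype.card V) * specNorm (nbWalkMatrix G k) ^ q * frobNorm (nbWalkMatrix G r) := by
        ring

/-- Lemma `lem:upper-bound-l-walks`: writing `s = qk + r` with `0 ≤ r < k ≤ s`,
`tr(A^{(s)}) ≤ √n · ‖A^{(k)}‖₂^q · ‖A^{(r)}‖_F`. -/
theorem trace_nb_walk_matrix_le {V : Type} [Fintype V] (G : SimpleGraph V)
    (s k q r : ℕ) (hk : 1 ≤ k) (hks : k ≤ s) (hs : s = q * k + r) (hr : r < k) :
    (nbWalkMatrix G s).trace ≤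
      Real.sqrt (Fintype.card V) * specNorm (nbWalkMatrix G k) ^ q *
        frobNorm (nbWalkMatrix G r) :=
  trace_nb_walk_matrix_le_general G s k q r hs

end UNE
end
end
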